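/- Let Q½ be an invertible real m×m matrix and set Q := Q½ (Q½)ᵀ; let Ω̂½ be a real p×p matrix and set Ω̂ := Ω̂½ (Ω̂½)ᵀ; let L be a symmetric real n×n matrix, F a real p×n matrix, Ā a real p×p matrix, and B a real m×p matrix. Suppose 𝒬 is a real (n+p+m)×(n+p+m) matrix with 𝒬ᵀ 𝒬 = I, and R₁ (n×n), R₂ (n×p), R₃ (p×p) are matrices such that the (n+p+m)×(n+p) block matrix with block rows [I_n, 0; (Ω̂½)ᵀ F L, (Ω̂½)ᵀ Ā; 0, (Q½)⁻¹ B] equals 𝒬 times the block matrix with block rows [R₁, R₂; 0, R₃; 0, 0]. Set M := L Fᵀ Ω̂ F L + I_n. Then R₁ᵀ R₁ = M, R₁ᵀ R₂ = L Fᵀ Ω̂ Ā, and R₃ᵀ R₃ = Āᵀ Ω̂ Ā + Bᵀ Q⁻¹ B − Āᵀ Ω̂ F L M⁻¹ L Fᵀ Ω̂ Ā. -/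

import Mathlib

/-!
Since `𝒬` has orthonormal columns, both sides of the factorisation have the same Gram matrix.
Comparing its blocks gives `R₁ᵀR₁ = GᵀG + 1`, `R₁ᵀR₂ = GᵀH` and `R₂ᵀR₂ + R₃ᵀR₃ = HᵀH + KᵀK`,
where `G, H, K` are the blocks of the pre-array. The matrix `GᵀG + 1` is positive definite, so `R₁`
is invertible and `R₂ᵀR₂ = (R₁ᵀR₂)ᵀ (R₁ᵀR₁)⁻¹ (R₁ᵀR₂)`; hence `R₃ᵀR₃` is the Schur complement
`HᵀH + KᵀK - HᵀG (GᵀG + 1)⁻¹ GᵀH`. With `G = Ω̂½ᵀFL`, `H = Ω̂½ᵀĀ` and `K = Q½⁻¹B` this is the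
claimed formula, because `Q⁻¹ = Q½⁻ᵀ Q½⁻¹`.
-/

open Matrix

namespace Matrix

variable {α : Type*} {k l r : Type*}

lemma transpose_mul_self_eq_of_eq_mul [CommSemiring α] {s c : Type*} [Fintype s] [DecidableEq s]
    {𝒬 : Matrix s s α} {A R : Matrix s c α} (h𝒬 : 𝒬ᵀ * 𝒬 = 1) (hA : A = 𝒬 * R) :
    Aᵀ * A = Rᵀ * R := by
  rw [hA, transpose_mul, Matrix.mul_assoc, ← Matrix.mul_assoc 𝒬ᵀ, h𝒬, Matrix.one_mul]

lemma transpose_mul_self_fromRows_fromCols₃ [CommSemiring α] [Fintype k] [Fintype l]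
    [Fintype r] {c d : Type*}
    (X₁ : Matrix k c α) (X₂ : Matrix k d α) (Y₁ : Matrix l c α) (Y₂ : Matrix l d α)
    (Z₁ : Matrix r c α) (Z₂ : Matrix r d α) :
    (fromRows (fromCols X₁ X₂) (fromRows (fromCols Y₁ Y₂) (fromCols Z₁ Z₂)))ᵀ *
        fromRows (fromCols X₁ X₂) (fromRows (fromCols Y₁ Y₂) (fromCols Z₁ Z₂)) =
      fromBlocks (X₁ᵀ * X₁ + (Y₁ᵀ * Y₁ + Z₁ᵀ * Z₁)) (X₁ᵀ * X₂ + (Y₁ᵀ * Y₂ + Z₁ᵀ * Z₂))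
        (X₂ᵀ * X₁ + (Y₂ᵀ * Y₁ + Z₂ᵀ * Z₁)) (X₂ᵀ * X₂ + (Y₂ᵀ * Y₂ + Z₂ᵀ * Z₂)) := by
  simp only [transpose_fromRows, transpose_fromCols, fromCols_mul_fromRows,
    fromRows_mul_fromCols, fromBlocks_add]

lemma isUnit_of_isUnit_transpose_mul_self [CommRing α] [Fintype k] [DecidableEq k]
    {R : Matrix k k α} (h : IsUnit (Rᵀ * R)) : IsUnit R := by
  rw [isUnit_iff_isUnit_det, det_mul, det_transpose] at h
  exact (isUnit_iff_isUnit_det R).mpr (isUnit_mul_self_iff.mp h)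

lemma transpose_mul_self_eq_of_isUnit [CommRing α] [Fintype k] [DecidableEq k]
    {R₁ : Matrix k k α} (R₂ : Matrix k l α) (h : IsUnit (R₁ᵀ * R₁)) :
    R₂ᵀ * R₂ = (R₁ᵀ * R₂)ᵀ * (R₁ᵀ * R₁)⁻¹ * (R₁ᵀ * R₂) := by
  have hR₁ : IsUnit R₁.det := (isUnit_iff_isUnit_det R₁).mp (isUnit_of_isUnit_transpose_mul_self h)
  have hR₁t : IsUnit R₁ᵀ.det := by rwa [det_transpose]
  calc R₂ᵀ * R₂ = R₂ᵀ * ((R₁ * R₁⁻¹) * (R₁ᵀ⁻¹ * R₁ᵀ)) * R₂ := by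
        rw [mul_nonsing_inv _ hR₁, nonsing_inv_mul _ hR₁t, Matrix.mul_one, Matrix.mul_one]
    _ = (R₁ᵀ * R₂)ᵀ * (R₁ᵀ * R₁)⁻¹ * (R₁ᵀ * R₂) := by
        simp only [transpose_mul, transpose_transpose, Matrix.mul_inv_rev, Matrix.mul_assoc]

lemma posDef_transpose_mul_self_add_one [Fintype k] [DecidableEq k] {c : Type*} [Fintype c]
    (G : Matrix c k ℝ) : (Gᵀ * G + 1).PosDef := by
  rw [← conjTranspose_eq_transpose_of_trivial]
  exact PosDef.posSemidef_add (posSemidef_conjTranspose_mul_self G) PosDef.one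

theorem qr_gram_identities [Fintype k] [Fintype l] [Fintype r] [DecidableEq k] [DecidableEq l]
    [DecidableEq r] (G : Matrix l k ℝ) (H : Matrix l l ℝ) (K : Matrix r l ℝ)
    (𝒬 : Matrix (k ⊕ (l ⊕ r)) (k ⊕ (l ⊕ r)) ℝ) (h𝒬 : 𝒬ᵀ * 𝒬 = 1)
    (R₁ : Matrix k k ℝ) (R₂ : Matrix k l ℝ) (R₃ : Matrix l l ℝ)
    (hfac : fromRows (fromCols (1 : Matrix k k ℝ) 0)
        (fromRows (fromCols G H) (fromCols (0 : Matrix r k ℝ) K)) =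
      𝒬 * fromRows (fromCols R₁ R₂)
        (fromRows (fromCols (0 : Matrix l k ℝ) R₃) (fromCols (0 : Matrix r k ℝ) 0))) :
    R₁ᵀ * R₁ = Gᵀ * G + 1 ∧ R₁ᵀ * R₂ = Gᵀ * H ∧
      R₃ᵀ * R₃ = Hᵀ * H + Kᵀ * K - Hᵀ * G * (Gᵀ * G + 1)⁻¹ * (Gᵀ * H) := by
  have hgram := transpose_mul_self_eq_of_eq_mul h𝒬 hfac
  rw [transpose_mul_self_fromRows_fromCols₃, transpose_mul_self_fromRows_fromCols₃,
    fromBlocks_inj] at hgram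
  obtain ⟨h₁₁, h₁₂, -, h₂₂⟩ := hgram
  simp only [transpose_one, transpose_zero, Matrix.one_mul, Matrix.zero_mul, add_zero,
    zero_add] at h₁₁ h₁₂ h₂₂
  have e₁₁ : R₁ᵀ * R₁ = Gᵀ * G + 1 := by rw [← h₁₁, add_comm]
  have hR₂ := transpose_mul_self_eq_of_isUnit R₂
    (e₁₁ ▸ (posDef_transpose_mul_self_add_one G).isUnit)
  rw [e₁₁, ← h₁₂, transpose_mul, transpose_transpose] at hR₂
  refine ⟨e₁₁, h₁₂.symm, ?_⟩
  rw [← hR₂, h₂₂]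
  abel

end Matrix

theorem sqrt_mixed_backward_prediction
    (m n p : ℕ) (Qsqrt : Matrix (Fin m) (Fin m) ℝ)
    (Ωsqrt : Matrix (Fin p) (Fin p) ℝ)
    (L : Matrix (Fin n) (Fin n) ℝ) (hL : Lᵀ = L)
    (F : Matrix (Fin p) (Fin n) ℝ) (Abar : Matrix (Fin p) (Fin p) ℝ)
    (B : Matrix (Fin m) (Fin p) ℝ)
    (𝒬 : Matrix (Fin n ⊕ (Fin p ⊕ Fin m)) (Fin n ⊕ (Fin p ⊕ Fin m)) ℝ)
    (h𝒬 : 𝒬ᵀ * 𝒬 = 1)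
    (R₁ : Matrix (Fin n) (Fin n) ℝ) (R₂ : Matrix (Fin n) (Fin p) ℝ)
    (R₃ : Matrix (Fin p) (Fin p) ℝ)
    (hfac : Matrix.fromRows
        (Matrix.fromCols (1 : Matrix (Fin n) (Fin n) ℝ)
          (0 : Matrix (Fin n) (Fin p) ℝ))
        (Matrix.fromRows
          (Matrix.fromCols (Ωsqrtᵀ * F * L) (Ωsqrtᵀ * Abar))
          (Matrix.fromCols (0 : Matrix (Fin m) (Fin n) ℝ) (Qsqrt⁻¹ * B)))
      = 𝒬 * Matrix.fromRows
          (Matrix.fromCols R₁ R₂)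
          (Matrix.fromRows
            (Matrix.fromCols (0 : Matrix (Fin p) (Fin n) ℝ) R₃)
            (Matrix.fromCols (0 : Matrix (Fin m) (Fin n) ℝ)
              (0 : Matrix (Fin m) (Fin p) ℝ)))) :
    let Q : Matrix (Fin m) (Fin m) ℝ := Qsqrt * Qsqrtᵀ
    let Ωhat : Matrix (Fin p) (Fin p) ℝ := Ωsqrt * Ωsqrtᵀ
    let M : Matrix (Fin n) (Fin n) ℝ := L * Fᵀ * Ωhat * F * L + 1
    R₁ᵀ * R₁ = M ∧
    R₁ᵀ * R₂ = L * Fᵀ * Ωhat * Abar ∧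
    R₃ᵀ * R₃ = Abarᵀ * Ωhat * Abar + Bᵀ * Q⁻¹ * B
      - Abarᵀ * Ωhat * F * L * M⁻¹ * L * Fᵀ * Ωhat * Abar := by
  intro Q Ωhat M
  obtain ⟨h₁₁, h₁₂, h₃₃⟩ := qr_gram_identities _ _ _ 𝒬 h𝒬 R₁ R₂ R₃ hfac
  have hQ : Q⁻¹ = Qsqrt⁻¹ᵀ * Qsqrt⁻¹ := by rw [Matrix.mul_inv_rev, transpose_nonsing_inv]
  have hM : M = (Ωsqrtᵀ * F * L)ᵀ * (Ωsqrtᵀ * F * L) + 1 := by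
    simp only [M, Ωhat, transpose_mul, transpose_transpose, hL, Matrix.mul_assoc]
  refine ⟨hM ▸ h₁₁, ?_, ?_⟩
  · rw [h₁₂]
    simp only [Ωhat, transpose_mul, transpose_transpose, hL, Matrix.mul_assoc]
  · rw [h₃₃, hQ, ← hM]
    simp only [Ωhat, transpose_mul, transpose_transpose, hL, Matrix.mul_assoc]
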